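/- arXiv:1111.5180 — 3 statements merged into one kernel-verified Lean document; each statement's English description precedes it below -/
import Mathlib

section
/- A set E is injective if and only if for all sets X ⊆ Y, every E-partition of X extends to an E-partition of Y, where an E-partition of X is a family (X_e)_{e∈E} of pairwise disjoint subsets with union X, and an extension requires X_e ⊆ Y_e for all e. -/
/-- A type `E` is injective (as a set in the category of sets) if every map into `E`
extends along every injection. -/
def IsInjectiveType (E : Type) : Prop :=
  ∀ (X Y : Type) (i : X → Y), Function.Injective i →
    ∀ f : X → E, ∃ g : Y → E, ∀ x, g (i x) = f x

/-- A set `E` is injective iff every `E`-partition of `X` extends to an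
`E`-partition of `Y`, for any pair of sets `X ⊆ Y` (given by an injection). -/
theorem injective_iff_partition (E : Type) :
    IsInjectiveType E ↔
      ∀ (X Y : Type) (i : X → Y), Function.Injective i →
        ∀ P : E → Set X, (∀ x, ∃! e, x ∈ P e) →
          ∃ Q : E → Set Y, (∀ y, ∃! e, y ∈ Q e) ∧
            ∀ e, ∀ x ∈ P e, i x ∈ Q e := by
  constructor
  · intro hE X Y i hi P hP
    obtain ⟨g, hg⟩ := hE X Y i hi (fun x => (hP x).choose)
    refine ⟨fun e => g ⁻¹' {e}, fun y => ⟨g y, rfl, fun e he => he.symm⟩, ?_⟩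
    intro e x hx
    have : (hP x).choose = e := ((hP x).choose_spec.2 e hx).symm
    simp only [Set.mem_preimage, Set.mem_singleton_iff, hg, this]
  · intro h X Y i hi f
    obtain ⟨Q, hQ, hext⟩ := h X Y i hi (fun e => f ⁻¹' {e})
      (fun x => ⟨f x, rfl, fun e he => he.symm⟩)
    refine ⟨fun y => (hQ y).choose, fun x => ?_⟩
    exact ((hQ (i x)).choose_spec.2 (f x) (hext (f x) x rfl)).symm
end

section
/- The general uniformity principle implies that every injective set is a subsingleton (hence, being also inhabited, a singleton). -/
/-- The general uniformity principle implies that every injective set is a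
subsingleton. -/
theorem gup_subsingleton
    (gup : ∀ (A : Type) (φ : Type → A → Prop),
      (∀ X : Type, ∃ y : A, φ X y) → ∃ y : A, ∀ X : Type, φ X y) :
    ∀ E : Type, IsInjectiveType E → ∀ u v : E, u = v := by
  intro E hE u v
  have key : ∀ X : Type, ∃ y : E, (Nonempty X → y = u) ∧ (¬ Nonempty X → y = v) := by
    intro X
    have hsub : ∀ a b : PLift (Nonempty X) ⊕ PLift (¬ Nonempty X), a = b := by
      rintro (a | a) (b | b)
      · exact congrArg Sum.inl (Subsingleton.elim a b)
      · exact absurd a.down b.down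
      · exact absurd b.down a.down
      · exact congrArg Sum.inr (Subsingleton.elim a b)
    obtain ⟨g, hg⟩ := hE (PLift (Nonempty X) ⊕ PLift (¬ Nonempty X)) Unit
      (fun _ => ()) (fun a b _ => hsub a b) (Sum.elim (fun _ => u) (fun _ => v))
    exact ⟨g (), fun hX => hg (Sum.inl ⟨hX⟩), fun hX => hg (Sum.inr ⟨hX⟩)⟩
  obtain ⟨y, hy⟩ := gup E (fun X y => (Nonempty X → y = u) ∧ (¬ Nonempty X → y = v)) key
  have h1 := (hy Unit).1 ⟨()⟩
  have h2 := (hy Empty).2 (fun ⟨e⟩ => e.elim)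
  rw [← h1, ← h2]
end

section
/- Every P₁-complete set E (a set of sets closed under unions of subsingleton subsets: ⋃S ∈ E for every subsingleton S ⊆ E) contains the empty set and is injective: given f : X → E and X ⊆ Y, the map ŷ ↦ ⋃{f(x) : x ∈ {y} ∩ X} defines an extension of f to Y with values in E. -/
/-- The canonical extension `f̂(y) = ⋃ {f(x) : x ∈ {y} ∩ X}` of a map `f` with
domain `X` (here `f : ZFSet → ZFSet` together with the domain `X`). -/
noncomputable def fhat (f : ZFSet → ZFSet) (X : ZFSet) (y : ZFSet) : ZFSet :=
  ZFSet.sUnion (ZFSet.sep (fun _ => y ∈ X) {f y})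

/-- Every P₁-complete set contains the empty set and is injective, via the
canonical extension `f̂`. -/
theorem p1complete_injective (E : ZFSet)
    (hE : ∀ S : ZFSet, S ⊆ E → (∀ u ∈ S, ∀ v ∈ S, u = v) → ZFSet.sUnion S ∈ E) :
    (∅ : ZFSet) ∈ E ∧
      ∀ (X Y : ZFSet) (f : ZFSet → ZFSet), X ⊆ Y → (∀ x ∈ X, f x ∈ E) →
        (∀ y ∈ Y, fhat f X y ∈ E) ∧ (∀ x ∈ X, fhat f X x = f x) := by
  have hempty : (∅ : ZFSet) ∈ E := by
    have := hE ∅ (by intro z hz; exact absurd hz (ZFSet.notMem_empty z))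
      (by intro u hu; exact absurd hu (ZFSet.notMem_empty u))
    rwa [ZFSet.sUnion_empty] at this
  refine ⟨hempty, fun X Y f hXY hf => ?_⟩
  constructor
  · intro y _
    apply hE
    · intro z hz
      rw [ZFSet.mem_sep] at hz
      obtain ⟨hz1, hz2⟩ := hz
      rw [ZFSet.mem_singleton] at hz1
      subst hz1
      exact hf y hz2
    · intro u hu v hv
      rw [ZFSet.mem_sep, ZFSet.mem_singleton] at hu hv
      rw [hu.1, hv.1]
  · intro x hx
    unfold fhat
    have : ZFSet.sep (fun _ => x ∈ X) {f x} = {f x} := by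
      ext z
      rw [ZFSet.mem_sep]
      exact ⟨fun h => h.1, fun h => ⟨h, hx⟩⟩
    rw [this]
    exact ZFSet.sUnion_singleton
end
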